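/- Ring-doubling impossibility argument (weak fairness): Let A be any deterministic population protocol over states Q with colors f : Q → {red, blue}. Let Ξ = C₀, C₁, ... be an execution of A on the 3-ring R₁ with agents v₀, v₁, v₂ (edges (v₀,v₁), (v₁,v₂), (v₂,v₀)), starting from all agents in the same initial state. Construct the 6-ring R₂ with agents v'₀,...,v'₅ and edges (v'₀,v'₁), (v'₁,v'₅), (v'₅,v'₃), (v'₃,v'₄), (v'₄,v'₂), (v'₂,v'₀), and define the execution Ξ' = D₀, D'₀, D₁, D'₁, ... that simulates each interaction of Ξ twice as specified (interactions involving v₀ are simulated at indices i and i+3; the interaction (v₁,v₂) is simulated as (v'₁,v'₅) then (v'₄,v'₂)). Then for every r ≥ 0 and every i ∈ {0,1,2}, s(v_i, C_r) = s(v'_i, D_r) = s(v'_{i+3}, D_r). Consequently, if every C_r with r ≥ t satisfies #red = 1 and #blue = 2 on R₁, then every D_r with r ≥ t satisfies #red = 2 and #blue = 4 on R₂. -/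

import Mathlib

/-- Colors. -/
inductive Color2 : Type
  | red | blue
deriving DecidableEq

/-- Apply the transition function `δ` to the ordered pair of agents `p`. -/
def apply2 {Q V : Type} [DecidableEq V] (δ : Q → Q → Q × Q) (p : V × V)
    (C : V → Q) : V → Q :=
  Function.update (Function.update C p.1 (δ (C p.1) (C p.2)).1) p.2
    (δ (C p.1) (C p.2)).2

/-- Number of agents with color `c`. -/
def cntCol {Q V : Type} [Fintype V] (f : Q → Color2) (C : V → Q) (c : Color2) : ℕ :=
  (Finset.univ.filter fun a => f (C a) = c).card

/-- The ring `R₁` on three agents (edges (v₀,v₁), (v₁,v₂), (v₂,v₀)). -/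
def AdjR1 (x y : Fin 3) : Prop := x ≠ y

/-- The ring `R₂` on six agents with edges
(v'₀,v'₁), (v'₁,v'₅), (v'₅,v'₃), (v'₃,v'₄), (v'₄,v'₂), (v'₂,v'₀). -/
def AdjR2 (x y : Fin 6) : Prop :=
  (x, y) ∈ [((0 : Fin 6), (1 : Fin 6)), (1, 0), (1, 5), (5, 1), (5, 3), (3, 5),
    (3, 4), (4, 3), (4, 2), (2, 4), (2, 0), (0, 2)]

/-- The copy `v'_i` of `v_i` in the first half of `R₂`. -/
def emb1 (i : Fin 3) : Fin 6 := ⟨i.1, by omega⟩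

/-- The copy `v'_{i+3}` of `v_i` in the second half of `R₂`. -/
def emb2 (i : Fin 3) : Fin 6 := ⟨i.1 + 3, by omega⟩

/-!
Reducing indices mod 3 is a graph covering `R₂ → R₁` of degree two: over the edge `v₀v₁` lie
`v'₀v'₁` and `v'₃v'₄`, over `v₂v₀` lie `v'₂v'₀` and `v'₅v'₃`, while over `v₁v₂` lie the crossing
edges `v'₁v'₅` and `v'₄v'₂`. The two lifts of an edge are disjoint, and each meets exactly the
copies of its two endpoints, so if `D_r` is `C_r` pulled back along the covering, firing both
lifts of the edge used at step `r` yields the pull-back of `C_{r+1}`. Pulling back along a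
degree-two covering doubles every color count.
-/

section Covering

variable {Q V W : Type}

theorem cntCol_comp_of_card_fiber [Fintype V] [Fintype W] [DecidableEq V] (f : Q → Color2)
    (C : V → Q) (c : Color2) (π : W → V) {k : ℕ}
    (hπ : ∀ v, (Finset.univ.filter fun w => π w = v).card = k) :
    cntCol f (C ∘ π) c = k * cntCol f C c := by
  unfold cntCol
  rw [Finset.card_eq_sum_card_fiberwise (f := π) (t := Finset.univ.filter fun v => f (C v) = c)
    (fun w hw => by simpa using hw), Finset.sum_const_nat (m := k), mul_comm]
  intro v hv
  rw [← hπ v]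
  congr 1
  ext w
  simp only [Finset.mem_filter, Finset.mem_univ, true_and, Function.comp_apply] at hv ⊢
  exact ⟨fun h => h.2, fun h => ⟨h ▸ hv, h⟩⟩

def IsDoubleLift (π : W → V) (p : V × V) (e e' : W × W) : Prop :=
  (∀ w, π w = p.1 ↔ w = e.1 ∨ w = e'.1) ∧ (∀ w, π w = p.2 ↔ w = e.2 ∨ w = e'.2) ∧
    e.1 ≠ e'.1 ∧ e.2 ≠ e'.2

theorem IsDoubleLift.apply2_apply2_comp [DecidableEq V] [DecidableEq W] {π : W → V}
    {p : V × V} {e e' : W × W} (h : IsDoubleLift π p e e') (hp : p.1 ≠ p.2)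
    (δ : Q → Q → Q × Q) (C : V → Q) :
    apply2 δ e' (apply2 δ e (C ∘ π)) = apply2 δ p C ∘ π := by
  obtain ⟨u, v⟩ := p
  obtain ⟨a, b⟩ := e
  obtain ⟨a', b'⟩ := e'
  obtain ⟨hu, hv, ha, hb⟩ := h
  simp only at hu hv ha hb hp ⊢
  have hne {x y : W} (hx : π x = u) (hy : π y = v) : x ≠ y := fun h => hp (hx ▸ hy ▸ h ▸ rfl)
  have hau : π a = u := (hu a).2 (Or.inl rfl)
  have ha'u : π a' = u := (hu a').2 (Or.inr rfl)
  have hbv : π b = v := (hv b).2 (Or.inl rfl)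
  have hb'v : π b' = v := (hv b').2 (Or.inr rfl)
  have hab := hne hau hbv
  have hab' := hne hau hb'v
  have ha'b := hne ha'u hbv
  have ha'b' := hne ha'u hb'v
  funext w
  by_cases hwu : π w = u
  · rcases (hu w).1 hwu with rfl | rfl <;> simp [apply2, Function.update, *, Ne.symm]
  by_cases hwv : π w = v
  · rcases (hv w).1 hwv with rfl | rfl <;> simp [apply2, Function.update, *, Ne.symm]
  · obtain ⟨⟨hwa, hwa'⟩, hwb, hwb'⟩ : (w ≠ a ∧ w ≠ a') ∧ w ≠ b ∧ w ≠ b' := by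
      rw [← not_or, ← not_or, ← hu, ← hv]
      exact ⟨hwu, hwv⟩
    simp [apply2, Function.update, *]

end Covering

def ringCover (x : Fin 6) : Fin 3 := ⟨x.1 % 3, Nat.mod_lt _ (by norm_num)⟩

def liftEdge (p : Fin 3 × Fin 3) : (Fin 6 × Fin 6) × (Fin 6 × Fin 6) :=
  if p.1 ≠ 0 ∧ p.2 ≠ 0 then ((emb1 p.1, emb2 p.2), (emb2 p.1, emb1 p.2))
  else ((emb1 p.1, emb1 p.2), (emb2 p.1, emb2 p.2))

theorem card_ringCover_fiber (i : Fin 3) :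
    (Finset.univ.filter fun x => ringCover x = i).card = 2 := by
  revert i; decide

theorem ringCover_emb1 (i : Fin 3) : ringCover (emb1 i) = i := by
  revert i; decide

theorem ringCover_emb2 (i : Fin 3) : ringCover (emb2 i) = i := by
  revert i; decide

theorem liftEdge_spec (p : Fin 3 × Fin 3) (hp : AdjR1 p.1 p.2) :
    AdjR2 (liftEdge p).1.1 (liftEdge p).1.2 ∧ AdjR2 (liftEdge p).2.1 (liftEdge p).2.2 ∧
      IsDoubleLift ringCover p (liftEdge p).1 (liftEdge p).2 := by
  revert p; unfold AdjR1 AdjR2 IsDoubleLift; decide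

theorem stmt19 (Q : Type) (δ : Q → Q → Q × Q) (f : Q → Color2) (q0 : Q)
    (Ξ : ℕ → Fin 3 → Q) (pairs : ℕ → Fin 3 × Fin 3)
    (hinit : Ξ 0 = fun _ => q0)
    (hedges : ∀ i, AdjR1 (pairs i).1 (pairs i).2)
    (hexec : ∀ i, Ξ (i + 1) = apply2 δ (pairs i) (Ξ i))
    (t : ℕ) :
    ∃ D D' : ℕ → Fin 6 → Q,
      (D 0 = fun _ => q0) ∧
      (∀ r, ∃ p : Fin 6 × Fin 6, AdjR2 p.1 p.2 ∧ D' r = apply2 δ p (D r)) ∧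
      (∀ r, ∃ p : Fin 6 × Fin 6, AdjR2 p.1 p.2 ∧ D (r + 1) = apply2 δ p (D' r)) ∧
      (∀ r (i : Fin 3), D r (emb1 i) = Ξ r i ∧ D r (emb2 i) = Ξ r i) ∧
      ((∀ r, t ≤ r → cntCol f (Ξ r) .red = 1 ∧ cntCol f (Ξ r) .blue = 2) →
        ∀ r, t ≤ r → cntCol f (D r) .red = 2 ∧ cntCol f (D r) .blue = 4) := by
  have hlift r := liftEdge_spec (pairs r) (hedges r)
  refine ⟨fun r => Ξ r ∘ ringCover, fun r => apply2 δ (liftEdge (pairs r)).1 (Ξ r ∘ ringCover),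
    by simp only [hinit]; rfl, fun r => ⟨_, (hlift r).1, rfl⟩, fun r => ⟨_, (hlift r).2.1, ?_⟩,
    fun r i => ⟨congrArg (Ξ r) (ringCover_emb1 i), congrArg (Ξ r) (ringCover_emb2 i)⟩, ?_⟩
  · exact (hexec r ▸ (hlift r).2.2.apply2_apply2_comp (hedges r) δ (Ξ r)).symm
  · intro hcount r hr
    simp [cntCol_comp_of_card_fiber f _ _ _ card_ringCover_fiber, hcount r hr]
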